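/- Fix L > 2π, and for k ∈ (0, k_L) define c(k) = L²/(L² - 16K(k)²√(1-k²+k⁴)), where k_L ∈ (0,1) is chosen so that L² - 16K(k)²√(1-k²+k⁴) > 0 on (0, k_L). Then c(k) > 1 for all k ∈ (0,k_L), c(k) → 1 + 4π²/(L²-4π²) as k → 0⁺, and hence the range of wave speeds is contained in (1 + 4π²/(L²-4π²), +∞). -/

import Mathlib

/-!
The admissible speeds of the stable cnoidal waves of the BBM equation with
period L > 2π: for k ∈ (0, k_L) (k_L chosen so that the denominator is
positive) the speed  c(k) = L²/(L² − 16K(k)²√(1−k²+k⁴))  satisfies c(k) > 1,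
c(k) → 1 + 4π²/(L²−4π²) as k → 0⁺, and c(k) > 1 + 4π²/(L²−4π²) throughout,
so the range of speeds is contained in (1 + 4π²/(L²−4π²), +∞).
Here K is the complete elliptic integral of the first kind.
-/

open MeasureTheory

/-- The complete elliptic integral of the first kind
`K(k) = ∫₀^{π/2} dθ/√(1 − k² sin²θ)`. -/
noncomputable def Kell (k : ℝ) : ℝ :=
  ∫ θ in (0:ℝ)..(Real.pi / 2), (Real.sqrt (1 - k ^ 2 * Real.sin θ ^ 2))⁻¹

/-- The cnoidal wave speed `c(k)`. -/
noncomputable def cBBM (L k : ℝ) : ℝ :=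
  L ^ 2 / (L ^ 2 - 16 * (Kell k) ^ 2 * Real.sqrt (1 - k ^ 2 + k ^ 4))

/-!
From `(1 - x)^{-1/2} ≥ 1 + x/2` and `∫₀^{π/2} sin² = π/4` one gets
`K(k) ≥ (π/2)(1 + k²/4)`, and `(1 + t/4)⁴(1 - t + t²) > 1` for `t > 0` then gives
`16 K(k)² √(1 - k² + k⁴) > 4π²` for `0 < k < 1`. Hence the denominator of `c(k)` stays
below `L² - 4π²`, so `c(k) > L²/(L² - 4π²) = 1 + 4π²/(L² - 4π²)`. Squeezing `K(k)`
between `π/2` and `(π/2)/√(1 - k²)` shows `K(k) → π/2`, which gives the limit.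
-/

open Real Filter Topology Set

lemma one_add_half_le_inv_sqrt_one_sub {x : ℝ} (hx : x < 1) :
    1 + x / 2 ≤ (√(1 - x))⁻¹ := by
  have hs : 0 < √(1 - x) := sqrt_pos.mpr (by linarith)
  have hs2 : √(1 - x) ^ 2 = 1 - x := sq_sqrt (by linarith)
  by_cases ha : 1 + x / 2 ≤ 0
  · exact ha.trans (inv_nonneg.mpr hs.le)
  rw [← one_div, le_div_iff₀ hs]
  nlinarith [sq_nonneg x, mul_pos (not_le.mp ha) hs]

lemma one_lt_one_add_div_four_pow_four_mul {t : ℝ} (ht : 0 < t) :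
    1 < (1 + t / 4) ^ 4 * (1 - t + t ^ 2) := by
  nlinarith [pow_pos ht 2, pow_pos ht 3, pow_pos ht 4, pow_pos ht 5, pow_pos ht 6]

section Kell

variable {k : ℝ}

lemma one_sub_sq_mul_sin_sq_pos (hk : k ^ 2 < 1) (θ : ℝ) : 0 < 1 - k ^ 2 * sin θ ^ 2 := by
  nlinarith [sin_sq_le_one θ, sq_nonneg k, sq_nonneg (sin θ)]

lemma continuous_Kell_integrand (hk : k ^ 2 < 1) :
    Continuous fun θ : ℝ => (√(1 - k ^ 2 * sin θ ^ 2))⁻¹ :=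
  (continuous_sqrt.comp (by fun_prop)).inv₀ fun θ ↦
    (sqrt_pos.mpr (one_sub_sq_mul_sin_sq_pos hk θ)).ne'

lemma pi_div_two_mul_le_Kell (hk : k ^ 2 < 1) : π / 2 * (1 + k ^ 2 / 4) ≤ Kell k := by
  have hsin : IntervalIntegrable (fun θ ↦ sin θ ^ 2) volume 0 (π / 2) :=
    (continuous_sin.pow 2).intervalIntegrable _ _
  calc π / 2 * (1 + k ^ 2 / 4) = ∫ θ in (0)..(π / 2), (1 + k ^ 2 / 2 * sin θ ^ 2) := by
        rw [intervalIntegral.integral_add intervalIntegrable_const (hsin.const_mul _),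
          intervalIntegral.integral_const_mul, integral_sin_sq]
        simp only [intervalIntegral.integral_const, sub_zero, smul_eq_mul, sin_pi_div_two,
          cos_pi_div_two, sin_zero, cos_zero]
        ring
    _ ≤ Kell k := by
        refine intervalIntegral.integral_mono_on (by positivity)
          (intervalIntegrable_const.add (hsin.const_mul _))
          ((continuous_Kell_integrand hk).intervalIntegrable _ _) fun θ _ ↦ ?_
        have := one_add_half_le_inv_sqrt_one_sub (x := k ^ 2 * sin θ ^ 2)
          (by linarith [one_sub_sq_mul_sin_sq_pos hk θ])
        linarith

lemma Kell_le_pi_div_two_mul_inv_sqrt (hk : k ^ 2 < 1) :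
    Kell k ≤ π / 2 * (√(1 - k ^ 2))⁻¹ := by
  have hs : 0 < √(1 - k ^ 2) := sqrt_pos.mpr (by linarith)
  calc Kell k ≤ ∫ _ in (0)..(π / 2), (√(1 - k ^ 2))⁻¹ := by
        refine intervalIntegral.integral_mono_on (by positivity)
          ((continuous_Kell_integrand hk).intervalIntegrable _ _) intervalIntegrable_const
          fun θ _ ↦ inv_anti₀ hs (sqrt_le_sqrt ?_)
        nlinarith [sin_sq_le_one θ, sq_nonneg k]
    _ = π / 2 * (√(1 - k ^ 2))⁻¹ := by simp

lemma four_pi_sq_lt_sixteen_mul_Kell_sq_mul_sqrt (hk0 : k ≠ 0) (hk1 : k ^ 2 < 1) :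
    4 * π ^ 2 < 16 * Kell k ^ 2 * √(1 - k ^ 2 + k ^ 4) := by
  have hq : 0 < 1 - k ^ 2 + k ^ 4 := by nlinarith [sq_nonneg (k ^ 2 - 1)]
  have hs2 : √(1 - k ^ 2 + k ^ 4) ^ 2 = 1 - k ^ 2 + k ^ 4 := sq_sqrt hq.le
  have hs : 0 < √(1 - k ^ 2 + k ^ 4) := sqrt_pos.mpr hq
  have hK : (π / 2 * (1 + k ^ 2 / 4)) ^ 2 ≤ Kell k ^ 2 :=
    pow_le_pow_left₀ (by positivity) (pi_div_two_mul_le_Kell hk1) 2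
  have hpoly := one_lt_one_add_div_four_pow_four_mul (sq_pos_of_ne_zero hk0)
  have h1 : 1 < (1 + k ^ 2 / 4) ^ 2 * √(1 - k ^ 2 + k ^ 4) := by
    have : 1 < ((1 + k ^ 2 / 4) ^ 2 * √(1 - k ^ 2 + k ^ 4)) ^ 2 := by
      rw [mul_pow, hs2]; nlinarith
    nlinarith [mul_pos (by positivity : (0 : ℝ) < (1 + k ^ 2 / 4) ^ 2) hs]
  calc 4 * π ^ 2 < 4 * π ^ 2 * ((1 + k ^ 2 / 4) ^ 2 * √(1 - k ^ 2 + k ^ 4)) :=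
        lt_mul_of_one_lt_right (by positivity) h1
    _ = 16 * (π / 2 * (1 + k ^ 2 / 4)) ^ 2 * √(1 - k ^ 2 + k ^ 4) := by ring
    _ ≤ 16 * Kell k ^ 2 * √(1 - k ^ 2 + k ^ 4) := by gcongr

lemma tendsto_Kell_nhds_zero : Tendsto Kell (𝓝 0) (𝓝 (π / 2)) := by
  have hsmall : ∀ᶠ k : ℝ in 𝓝 0, k ^ 2 < 1 := by
    filter_upwards [Ioo_mem_nhds (by norm_num : (-1 : ℝ) < 0) one_pos] with k hk
    exact sq_lt_one_iff_abs_lt_one k |>.mpr (abs_lt.mpr hk)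
  have hupper : Tendsto (fun k : ℝ ↦ π / 2 * (√(1 - k ^ 2))⁻¹) (𝓝 0) (𝓝 (π / 2)) := by
    have : ContinuousAt (fun k : ℝ ↦ π / 2 * (√(1 - k ^ 2))⁻¹) 0 :=
      continuousAt_const.mul ((continuous_sqrt.comp (by fun_prop)).continuousAt.inv₀ (by simp))
    simpa using this.tendsto
  refine tendsto_of_tendsto_of_tendsto_of_le_of_le' tendsto_const_nhds hupper ?_ ?_
  · filter_upwards [hsmall] with k hk
    nlinarith [pi_div_two_mul_le_Kell hk, pi_pos, sq_nonneg k]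
  · filter_upwards [hsmall] with k hk
    exact Kell_le_pi_div_two_mul_inv_sqrt hk

end Kell

lemma tendsto_cBBM_nhds_zero {L : ℝ} (hL : L ^ 2 - 4 * π ^ 2 ≠ 0) :
    Tendsto (cBBM L) (𝓝 0) (𝓝 (L ^ 2 / (L ^ 2 - 4 * π ^ 2))) := by
  have hsqrt : Tendsto (fun k : ℝ ↦ √(1 - k ^ 2 + k ^ 4)) (𝓝 0) (𝓝 1) := by
    have : ContinuousAt (fun k : ℝ ↦ √(1 - k ^ 2 + k ^ 4)) 0 := by fun_prop
    simpa using this.tendsto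
  have hden := tendsto_const_nhds (x := L ^ 2) |>.sub
    (((tendsto_Kell_nhds_zero.pow 2).const_mul 16).mul hsqrt)
  rw [show 16 * (π / 2) ^ 2 * 1 = 4 * π ^ 2 by ring] at hden
  exact tendsto_const_nhds.div hden hL

lemma div_lt_cBBM {L k : ℝ} (hpos : 0 < L ^ 2 - 16 * Kell k ^ 2 * √(1 - k ^ 2 + k ^ 4))
    (hk0 : k ≠ 0) (hk1 : k ^ 2 < 1) : L ^ 2 / (L ^ 2 - 4 * π ^ 2) < cBBM L k := by
  have hlt := four_pi_sq_lt_sixteen_mul_Kell_sq_mul_sqrt hk0 hk1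
  exact div_lt_div_of_pos_left (by nlinarith [pi_pos]) hpos (by linarith)

theorem bbm_speed_range (L kL : ℝ) (hL : 2 * Real.pi < L)
    (hkL : kL ∈ Set.Ioo (0:ℝ) 1)
    (hpos : ∀ k ∈ Set.Ioo (0:ℝ) kL,
      0 < L ^ 2 - 16 * (Kell k) ^ 2 * Real.sqrt (1 - k ^ 2 + k ^ 4)) :
    (∀ k ∈ Set.Ioo (0:ℝ) kL, 1 < cBBM L k) ∧
    Filter.Tendsto (cBBM L) (nhdsWithin 0 (Set.Ioo (0:ℝ) kL))
      (nhds (1 + 4 * Real.pi ^ 2 / (L ^ 2 - 4 * Real.pi ^ 2))) ∧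
    (∀ k ∈ Set.Ioo (0:ℝ) kL,
      1 + 4 * Real.pi ^ 2 / (L ^ 2 - 4 * Real.pi ^ 2) < cBBM L k) := by
  have hL4 : 0 < L ^ 2 - 4 * π ^ 2 := by nlinarith [pi_pos]
  have hlim : 1 + 4 * π ^ 2 / (L ^ 2 - 4 * π ^ 2) = L ^ 2 / (L ^ 2 - 4 * π ^ 2) := by
    field_simp
    ring
  have hbound : ∀ k ∈ Ioo (0 : ℝ) kL, 1 + 4 * π ^ 2 / (L ^ 2 - 4 * π ^ 2) < cBBM L k :=
    fun k hk ↦ hlim ▸ div_lt_cBBM (hpos k hk) hk.1.ne'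
      (pow_lt_one₀ hk.1.le (hk.2.trans hkL.2) two_ne_zero)
  refine ⟨fun k hk ↦ ?_, ?_, hbound⟩
  · have : 0 < 4 * π ^ 2 / (L ^ 2 - 4 * π ^ 2) := by positivity
    linarith [hbound k hk]
  · rw [hlim]
    exact (tendsto_cBBM_nhds_zero hL4.ne').mono_left nhdsWithin_le_nhds
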